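/- Let F be a Gaussian mixture density with k₁ components on ℝ^{d₁} and G a Gaussian mixture density with k₂ components on ℝ^{d₂}. Then H(x,y) = F(x) G(y) is a Gaussian mixture density with k₁k₂ components on ℝ^{d₁+d₂}, it is homoscedastic whenever F and G are homoscedastic, and its modal set satisfies Mode(H) = Mode(F) × Mode(G). In particular, if F has at least M₁ ≥ 1 isolated modes and G has at least M₂ ≥ 1 isolated modes, then H has at least M₁M₂ isolated modes. -/

import Mathlib

open scoped BigOperators RealInnerProductSpace
open Matrix

/-- The density of a (nondegenerate) Gaussian with mean `μ` and covariance matrix `S`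
on the Euclidean space indexed by `ι`. -/
noncomputable def gaussianPdf {ι : Type*} [Fintype ι] [DecidableEq ι]
    (μ : EuclideanSpace ℝ ι) (S : Matrix ι ι ℝ) (x : EuclideanSpace ℝ ι) : ℝ :=
  (2 * Real.pi) ^ (-(Fintype.card ι : ℝ) / 2) * S.det ^ (-(1 : ℝ) / 2) *
    Real.exp (-(1 / 2 : ℝ) * ((fun i => x i - μ i) ⬝ᵥ (S⁻¹ *ᵥ (fun i => x i - μ i))))

/-- A `k`-component Gaussian mixture density. -/
noncomputable def mixturePdf {ι : Type*} [Fintype ι] [DecidableEq ι] {k : ℕ}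
    (α : Fin k → ℝ) (μ : Fin k → EuclideanSpace ℝ ι) (S : Fin k → Matrix ι ι ℝ)
    (x : EuclideanSpace ℝ ι) : ℝ :=
  ∑ i, α i * gaussianPdf (μ i) (S i) x

/-- `Φ` is a Gaussian mixture density with weights `α`, means `μ`,
and (positive definite) covariance matrices `S`. -/
def IsGaussianMixture {ι : Type*} [Fintype ι] [DecidableEq ι] {k : ℕ}
    (Φ : EuclideanSpace ℝ ι → ℝ) (α : Fin k → ℝ) (μ : Fin k → EuclideanSpace ℝ ι)
    (S : Fin k → Matrix ι ι ℝ) : Prop :=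
  (∀ i, 0 < α i) ∧ (∑ i, α i) = 1 ∧ (∀ i, (S i).PosDef) ∧
    ∀ x, Φ x = mixturePdf α μ S x

/-- The Hessian matrix of `f : ℝ^ι → ℝ` at `x`. -/
noncomputable def hessianMatrix {ι : Type*} [Fintype ι] [DecidableEq ι]
    (f : EuclideanSpace ℝ ι → ℝ) (x : EuclideanSpace ℝ ι) : Matrix ι ι ℝ :=
  Matrix.of fun i j =>
    iteratedFDeriv ℝ 2 f x ![EuclideanSpace.single i 1, EuclideanSpace.single j 1]

/-- The set of isolated modes (isolated local maxima) of a function `f`. -/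
def isolatedModes {E : Type*} [TopologicalSpace E] (f : E → ℝ) : Set E :=
  {x | IsLocalMax f x ∧ ∃ U ∈ nhds x, {y | IsLocalMax f y} ∩ U = {x}}

/-!
A Gaussian on `ℝ^ι × ℝ^κ` whose mean is `(μ, ν)` and whose covariance is block diagonal is the
product of the Gaussians with means `μ`, `ν`, so `F(x) G(y)` expands into a mixture of the
`k₁ k₂` products of components. Since `F` and `G` are
strictly positive, `(x, y)` is a local maximum of `F(x) G(y)` iff `x` and `y` are local maxima of
`F` and `G`; a product of neighbourhoods isolating `x` and `y` then isolates `(x, y)`.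
-/

open Set Filter Topology

/-- Its two components are, by `rfl`, the coordinate restrictions `toLp 2 (fun i => z (inl i))`
and `toLp 2 (fun j => z (inr j))`. -/
noncomputable def EuclideanSpace.sumHomeomorphProd (ι κ : Type*) [Fintype ι] [Fintype κ] :
    EuclideanSpace ℝ (ι ⊕ κ) ≃ₜ EuclideanSpace ℝ ι × EuclideanSpace ℝ κ :=
  (EuclideanSpace.equiv (ι ⊕ κ) ℝ).toHomeomorph.trans <|
    Homeomorph.sumArrowHomeomorphProdArrow.trans <|
      (EuclideanSpace.equiv ι ℝ).toHomeomorph.symm.prodCongr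
        (EuclideanSpace.equiv κ ℝ).toHomeomorph.symm

open scoped ComplexOrder in
theorem Matrix.PosDef.fromBlocks_zero {𝕜 m n : Type*} [RCLike 𝕜] [Fintype m] [Fintype n]
    [DecidableEq m] [DecidableEq n] {A : Matrix m m 𝕜} {D : Matrix n n 𝕜}
    (hA : A.PosDef) (hD : D.PosDef) : (fromBlocks A 0 0 D).PosDef := by
  have := hA.isUnit.invertible
  have hpsd : (fromBlocks A 0 0 D).PosSemidef := by
    simpa using (PosDef.fromBlocks₁₁ (0 : Matrix m n 𝕜) D hA).2 (by simpa using hD.posSemidef)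
  refine hpsd.posDef_iff_isUnit.2 ?_
  rw [isUnit_iff_isUnit_det, det_fromBlocks_zero₂₁]
  exact (A.isUnit_iff_isUnit_det.1 hA.isUnit).mul (D.isUnit_iff_isUnit_det.1 hD.isUnit)

section Gaussian

variable {ι κ : Type*} [Fintype ι] [DecidableEq ι] [Fintype κ] [DecidableEq κ]

theorem gaussianPdf_pos (μ : EuclideanSpace ℝ ι) {S : Matrix ι ι ℝ} (hS : S.PosDef)
    (x : EuclideanSpace ℝ ι) : 0 < gaussianPdf μ S x := by
  unfold gaussianPdf
  have := hS.det_pos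
  positivity

theorem IsGaussianMixture.pos {k : ℕ} {Φ : EuclideanSpace ℝ ι → ℝ} {α : Fin k → ℝ}
    {μ : Fin k → EuclideanSpace ℝ ι} {S : Fin k → Matrix ι ι ℝ}
    (h : IsGaussianMixture Φ α μ S) (x : EuclideanSpace ℝ ι) : 0 < Φ x := by
  obtain ⟨hα, hsum, hS, hΦ⟩ := h
  have : (Finset.univ : Finset (Fin k)).Nonempty :=
    Finset.univ_nonempty_iff.2 ⟨⟨0, Nat.pos_of_ne_zero fun hk => by subst hk; simp at hsum⟩⟩
  rw [hΦ]
  exact Finset.sum_pos (fun i _ => mul_pos (hα i) (gaussianPdf_pos _ (hS i) x)) this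

theorem gaussianPdf_sumElim_fromBlocks (μ : EuclideanSpace ℝ ι) (ν : EuclideanSpace ℝ κ)
    {S : Matrix ι ι ℝ} {T : Matrix κ κ ℝ} (hS : S.PosDef) (hT : T.PosDef)
    (z : EuclideanSpace ℝ (ι ⊕ κ)) :
    gaussianPdf (WithLp.toLp 2 (Sum.elim μ ν)) (fromBlocks S 0 0 T) z =
      gaussianPdf μ S (EuclideanSpace.sumHomeomorphProd ι κ z).1 *
        gaussianPdf ν T (EuclideanSpace.sumHomeomorphProd ι κ z).2 := by
  have h2π : (0 : ℝ) < 2 * Real.pi := by positivity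
  have hcard : (2 * Real.pi) ^ (-(Fintype.card (ι ⊕ κ) : ℝ) / 2) =
      (2 * Real.pi) ^ (-(Fintype.card ι : ℝ) / 2) *
        (2 * Real.pi) ^ (-(Fintype.card κ : ℝ) / 2) := by
    rw [← Real.rpow_add h2π, Fintype.card_sum]
    push_cast
    ring_nf
  have hdet : (fromBlocks S 0 0 T).det ^ (-(1 : ℝ) / 2) =
      S.det ^ (-(1 : ℝ) / 2) * T.det ^ (-(1 : ℝ) / 2) := by
    rw [det_fromBlocks_zero₂₁, Real.mul_rpow hS.det_pos.le hT.det_pos.le]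
  have hinv : (fromBlocks S 0 0 T)⁻¹ = fromBlocks S⁻¹ 0 0 T⁻¹ := by
    rw [inv_fromBlocks_zero₂₁_of_isUnit_iff S 0 T (by simp [hS.isUnit, hT.isUnit])]
    simp
  set e := EuclideanSpace.sumHomeomorphProd ι κ
  have hdiff : (fun s => z s - WithLp.toLp 2 (Sum.elim μ ν) s) =
      Sum.elim (fun i => (e z).1 i - μ i) (fun j => (e z).2 j - ν j) := by
    funext s; cases s <;> rfl
  unfold gaussianPdf
  rw [hcard, hdet, hdiff, hinv, fromBlocks_mulVec, sumElim_dotProduct_sumElim]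
  simp only [Matrix.zero_mulVec, add_zero, zero_add, Sum.elim_comp_inl, Sum.elim_comp_inr,
    mul_add, Real.exp_add]
  ring

theorem IsGaussianMixture.mul_sumHomeomorphProd {k₁ k₂ : ℕ}
    {F : EuclideanSpace ℝ ι → ℝ} {α₁ : Fin k₁ → ℝ} {μ₁ : Fin k₁ → EuclideanSpace ℝ ι}
    {S₁ : Fin k₁ → Matrix ι ι ℝ} (hF : IsGaussianMixture F α₁ μ₁ S₁)
    {G : EuclideanSpace ℝ κ → ℝ} {α₂ : Fin k₂ → ℝ} {μ₂ : Fin k₂ → EuclideanSpace ℝ κ}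
    {S₂ : Fin k₂ → Matrix κ κ ℝ} (hG : IsGaussianMixture G α₂ μ₂ S₂) :
    IsGaussianMixture
      ((fun q => F q.1 * G q.2) ∘ EuclideanSpace.sumHomeomorphProd ι κ)
      (fun m => α₁ (finProdFinEquiv.symm m).1 * α₂ (finProdFinEquiv.symm m).2)
      (fun m => WithLp.toLp 2
        (Sum.elim (μ₁ (finProdFinEquiv.symm m).1) (μ₂ (finProdFinEquiv.symm m).2)))
      (fun m => fromBlocks (S₁ (finProdFinEquiv.symm m).1) 0 0
        (S₂ (finProdFinEquiv.symm m).2)) := by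
  obtain ⟨hα₁, hsum₁, hS₁, hF⟩ := hF
  obtain ⟨hα₂, hsum₂, hS₂, hG⟩ := hG
  refine ⟨fun m => mul_pos (hα₁ _) (hα₂ _), ?_, fun m => (hS₁ _).fromBlocks_zero (hS₂ _),
    fun z => ?_⟩
  · rw [finProdFinEquiv.symm.sum_comp (fun p => α₁ p.1 * α₂ p.2), Fintype.sum_prod_type,
      ← Fintype.sum_mul_sum, hsum₁, hsum₂, one_mul]
  · rw [Function.comp_apply, hF, hG, mixturePdf, mixturePdf, Fintype.sum_mul_sum,
      ← Fintype.sum_prod_type', mixturePdf, ← finProdFinEquiv.symm.sum_comp]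
    refine Fintype.sum_congr _ _ fun m => ?_
    rw [gaussianPdf_sumElim_fromBlocks _ _ (hS₁ _) (hS₂ _)]
    ring

end Gaussian

section LocalMax

variable {X Y : Type*} [TopologicalSpace X] [TopologicalSpace Y]

theorem setOf_isLocalMax_comp_homeomorph {β : Type*} [Preorder β] (e : X ≃ₜ Y) (f : Y → β) :
    {x | IsLocalMax (f ∘ e) x} = e ⁻¹' {y | IsLocalMax f y} := by
  ext x
  simp only [mem_ofPred_eq, mem_preimage, IsLocalMax, IsMaxFilter, ← e.map_nhds_eq,
    eventually_map, Function.comp_apply]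

theorem preimage_isolatedModes_subset (e : X ≃ₜ Y) (f : Y → ℝ) :
    e ⁻¹' isolatedModes f ⊆ isolatedModes (f ∘ e) := by
  rintro x ⟨hmax, U, hU, hUx⟩
  refine ⟨hmax.comp_continuous e.continuous.continuousAt, e ⁻¹' U,
    e.continuous.continuousAt.preimage_mem_nhds hU, ?_⟩
  rw [setOf_isLocalMax_comp_homeomorph, ← preimage_inter, hUx, ← image_singleton, e.preimage_image]

variable {f : X → ℝ} {g : Y → ℝ}

theorem setOf_isLocalMax_mul_prod (hf : ∀ x, 0 < f x) (hg : ∀ y, 0 < g y) :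
    {p : X × Y | IsLocalMax (fun q => f q.1 * g q.2) p} =
      {x | IsLocalMax f x} ×ˢ {y | IsLocalMax g y} := by
  ext ⟨x, y⟩
  simp only [mem_ofPred_eq, mem_prod]
  constructor
  · intro h
    constructor
    · filter_upwards [h.comp_continuous (g := (·, y)) (Continuous.prodMk_left y).continuousAt]
        with x' hx'
      exact le_of_mul_le_mul_right hx' (hg y)
    · filter_upwards [h.comp_continuous (g := (x, ·)) (Continuous.prodMk_right x).continuousAt]
        with y' hy'
      exact le_of_mul_le_mul_left hy' (hf x)
  · rintro ⟨hx, hy⟩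
    rw [IsLocalMax, IsMaxFilter, nhds_prod_eq]
    filter_upwards [hx.prod_mk hy] with q ⟨hq₁, hq₂⟩
    exact mul_le_mul hq₁ hq₂ (hg _).le (hf _).le

theorem isolatedModes_prod_subset (hf : ∀ x, 0 < f x) (hg : ∀ y, 0 < g y) :
    isolatedModes f ×ˢ isolatedModes g ⊆ isolatedModes (fun q : X × Y => f q.1 * g q.2) := by
  rintro ⟨x, y⟩ ⟨⟨hx, U, hU, hUx⟩, ⟨hy, V, hV, hVy⟩⟩
  have hmodes := setOf_isLocalMax_mul_prod hf hg
  refine ⟨?_, U ×ˢ V, prod_mem_nhds hU hV, ?_⟩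
  · show (x, y) ∈ {p : X × Y | IsLocalMax (fun q => f q.1 * g q.2) p}
    rw [hmodes]
    exact ⟨hx, hy⟩
  · rw [hmodes, prod_inter_prod, hUx, hVy, singleton_prod_singleton]

end LocalMax

/-- Proposition: Cartesian products of Gaussian mixtures.
If $F$ is a $k_1$-component Gaussian mixture on $ℝ^{d_1}$ and $G$ a $k_2$-component
Gaussian mixture on $ℝ^{d_2}$, then $H(x,y)=F(x)G(y)$ is a $k_1k_2$-component Gaussian
mixture on $ℝ^{d_1+d_2} ≅ ℝ^{d_1} × ℝ^{d_2}$, homoscedastic whenever $F$ and $G$ are,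
with $\mathrm{Mode}(H)=\mathrm{Mode}(F)×\mathrm{Mode}(G)$; and at least $M_1M_2$ isolated
modes when $F$ and $G$ have at least $M_1$ and $M_2$ isolated modes respectively. -/
theorem cartesian_product_modes
    {d₁ d₂ k₁ k₂ : ℕ}
    (α₁ : Fin k₁ → ℝ) (μ₁ : Fin k₁ → EuclideanSpace ℝ (Fin d₁))
    (S₁ : Fin k₁ → Matrix (Fin d₁) (Fin d₁) ℝ)
    (F : EuclideanSpace ℝ (Fin d₁) → ℝ) (hF : IsGaussianMixture F α₁ μ₁ S₁)
    (α₂ : Fin k₂ → ℝ) (μ₂ : Fin k₂ → EuclideanSpace ℝ (Fin d₂))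
    (S₂ : Fin k₂ → Matrix (Fin d₂) (Fin d₂) ℝ)
    (G : EuclideanSpace ℝ (Fin d₂) → ℝ) (hG : IsGaussianMixture G α₂ μ₂ S₂)
    (H : EuclideanSpace ℝ (Fin d₁ ⊕ Fin d₂) → ℝ)
    (hH : ∀ z, H z = F (WithLp.toLp 2 (fun i => z (Sum.inl i))) * G (WithLp.toLp 2 (fun j => z (Sum.inr j)))) :
    (∃ (α' : Fin (k₁ * k₂) → ℝ) (μ' : Fin (k₁ * k₂) → EuclideanSpace ℝ (Fin d₁ ⊕ Fin d₂))
        (S' : Fin (k₁ * k₂) → Matrix (Fin d₁ ⊕ Fin d₂) (Fin d₁ ⊕ Fin d₂) ℝ),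
      IsGaussianMixture H α' μ' S' ∧
      ((∀ i j, S₁ i = S₁ j) → (∀ i j, S₂ i = S₂ j) → ∀ i j, S' i = S' j)) ∧
    {z : EuclideanSpace ℝ (Fin d₁ ⊕ Fin d₂) | IsLocalMax H z} =
      {z : EuclideanSpace ℝ (Fin d₁ ⊕ Fin d₂) |
        IsLocalMax F (WithLp.toLp 2 (fun i => z (Sum.inl i))) ∧ IsLocalMax G (WithLp.toLp 2 (fun j => z (Sum.inr j)))} ∧
    ∀ M₁ M₂ : ℕ, 1 ≤ M₁ → 1 ≤ M₂ →
      (∃ T₁ : Finset (EuclideanSpace ℝ (Fin d₁)), ↑T₁ ⊆ isolatedModes F ∧ M₁ ≤ T₁.card) →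
      (∃ T₂ : Finset (EuclideanSpace ℝ (Fin d₂)), ↑T₂ ⊆ isolatedModes G ∧ M₂ ≤ T₂.card) →
      ∃ T : Finset (EuclideanSpace ℝ (Fin d₁ ⊕ Fin d₂)),
        ↑T ⊆ isolatedModes H ∧ M₁ * M₂ ≤ T.card := by
  set e := EuclideanSpace.sumHomeomorphProd (Fin d₁) (Fin d₂)
  have hH' : H = (fun q => F q.1 * G q.2) ∘ e := funext hH
  have hModes :
      {z | IsLocalMax H z} = e ⁻¹' ({x | IsLocalMax F x} ×ˢ {y | IsLocalMax G y}) := by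
    rw [hH', setOf_isLocalMax_comp_homeomorph, setOf_isLocalMax_mul_prod hF.pos hG.pos]
  refine ⟨⟨_, _, _, hH' ▸ hF.mul_sumHomeomorphProd hG, fun h₁ h₂ i j => ?_⟩, hModes, ?_⟩
  · simp only [h₁ _ (finProdFinEquiv.symm j).1, h₂ _ (finProdFinEquiv.symm j).2]
  · rintro M₁ M₂ - - ⟨T₁, hT₁, hc₁⟩ ⟨T₂, hT₂, hc₂⟩
    refine ⟨(T₁ ×ˢ T₂).map e.symm.toEquiv.toEmbedding, ?_, ?_⟩
    · rw [Finset.coe_map, Finset.coe_product, Equiv.coe_toEmbedding, Homeomorph.coe_toEquiv,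
        e.image_symm, hH']
      exact (preimage_mono ((prod_mono hT₁ hT₂).trans
        (isolatedModes_prod_subset hF.pos hG.pos))).trans (preimage_isolatedModes_subset e _)
    · rw [Finset.card_map, Finset.card_product]
      exact Nat.mul_le_mul hc₁ hc₂
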